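/- arXiv:1908.04658 — 2 statements merged into one kernel-verified Lean document; each statement's English description precedes it below -/
import Mathlib

section
/- For r ≥ 2 and u > 0, the function h^r_u satisfies the smoothness-r bound ‖Δ^r_t h^r_u‖_{L_1(ℝ)} ≤ C |t|^r for all t ∈ ℝ, for some constant C depending only on r. -/
open MeasureTheory Set

noncomputable def hatOne (u : ℝ) : ℝ → ℝ := (Set.Ico (-(u/2)) (u/2)).indicator 1

noncomputable def conv (f g : ℝ → ℝ) : ℝ → ℝ := fun x => ∫ y, f (x - y) * g y

noncomputable def hat (u : ℝ) : ℕ → ℝ → ℝ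
  | 0 => fun _ => 0
  | 1 => hatOne u
  | (r + 2) => conv (hat u (r + 1)) (hatOne u)

/-- first difference operator `Δ_t f (x) = f x - f (x + t)` -/
noncomputable def fdiff (t : ℝ) (f : ℝ → ℝ) : ℝ → ℝ := fun x => f x - f (x + t)

/- ## Auxiliary lemmas -/

lemma hatOne_integrable (u : ℝ) : Integrable (hatOne u) := by
  rw [hatOne, integrable_indicator_iff measurableSet_Ico]
  exact integrableOn_const measure_Ico_lt_top.ne

lemma hatOne_measurable (u : ℝ) : Measurable (hatOne u) :=
  measurable_one.indicator measurableSet_Ico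

lemma hatOne_bdd (u : ℝ) (y : ℝ) : ‖hatOne u y‖ ≤ 1 := by
  rw [hatOne, Set.indicator]
  split_ifs <;> simp

lemma fdiff_integrable (t : ℝ) {f : ℝ → ℝ} (hf : Integrable f) :
    Integrable (fdiff t f) :=
  hf.sub (hf.comp_add_right t)

/-- integrability of the convolution integrand on the product space -/
lemma conv_integrand_integrable {f g : ℝ → ℝ} (hf : Integrable f) (hg : Integrable g) :
    Integrable (fun p : ℝ × ℝ => f (p.1 - p.2) * g p.2)
      ((volume : Measure ℝ).prod volume) := by
  have h1 : Integrable (fun p : ℝ × ℝ => f p.1 * g p.2)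
      ((volume : Measure ℝ).prod volume) := Integrable.mul_prod hf hg
  have hmp : MeasurePreserving (fun p : ℝ × ℝ => (p.1 - p.2, p.2))
      ((volume : Measure ℝ).prod volume) ((volume : Measure ℝ).prod volume) :=
    measurePreserving_sub_prod volume volume
  exact (hmp.integrable_comp h1.aestronglyMeasurable).2 h1

lemma conv_integrable {f g : ℝ → ℝ} (hf : Integrable f) (hg : Integrable g) :
    Integrable (conv f g) := by
  have := (conv_integrand_integrable hf hg).integral_prod_left
  exact this

/-- Young's inequality for L¹ -/
lemma conv_l1 {f g : ℝ → ℝ} (hf : Integrable f) (hg : Integrable g) :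
    ∫ x, |conv f g x| ≤ (∫ x, |f x|) * ∫ x, |g x| := by
  have hF := conv_integrand_integrable hf hg
  have hFn : Integrable (fun p : ℝ × ℝ => ‖f (p.1 - p.2) * g p.2‖)
      ((volume : Measure ℝ).prod volume) := hF.norm
  have step1 : ∫ x, |conv f g x| ≤ ∫ x, ∫ y, ‖f (x - y) * g y‖ := by
    refine integral_mono ((conv_integrable hf hg).abs) hFn.integral_prod_left ?_
    intro x
    simpa [Real.norm_eq_abs, conv] using
      norm_integral_le_integral_norm (fun y => f (x - y) * g y)
  have step2 : (∫ x, ∫ y, ‖f (x - y) * g y‖) = ∫ y, ∫ x, ‖f (x - y) * g y‖ :=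
    integral_integral_swap hFn
  have step3 : ∀ y : ℝ, (∫ x, ‖f (x - y) * g y‖) = (∫ x, |f x|) * ‖g y‖ := by
    intro y
    simp only [norm_mul]
    rw [integral_mul_const, integral_sub_right_eq_self (fun x => ‖f x‖) y]
    simp [Real.norm_eq_abs]
  calc ∫ x, |conv f g x| ≤ ∫ x, ∫ y, ‖f (x - y) * g y‖ := step1
    _ = ∫ y, ∫ x, ‖f (x - y) * g y‖ := step2
    _ = ∫ y, (∫ x, |f x|) * ‖g y‖ := by simp_rw [step3]
    _ = (∫ x, |f x|) * ∫ y, |g y| := by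
        rw [integral_const_mul]; simp [Real.norm_eq_abs]

/-- integrability of the sliced convolution integrand against a bounded function -/
lemma slice_integrable {f g : ℝ → ℝ} (hf : Integrable f) (hg : Measurable g)
    {C : ℝ} (hb : ∀ y, ‖g y‖ ≤ C) (x : ℝ) :
    Integrable (fun y => f (x - y) * g y) := by
  have h1 : Integrable (fun y => f (x - y)) := hf.comp_sub_left x
  have := Integrable.bdd_mul (f := g) (g := fun y => f (x - y)) h1
    hg.aestronglyMeasurable (ae_of_all _ hb)
  simpa [mul_comm] using this

lemma fdiff_conv_left (t u : ℝ) {f : ℝ → ℝ} (hf : Integrable f) :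
    fdiff t (conv f (hatOne u)) = conv (fdiff t f) (hatOne u) := by
  funext x
  have h1 := slice_integrable hf (hatOne_measurable u) (hatOne_bdd u) x
  have h2 := slice_integrable hf (hatOne_measurable u) (hatOne_bdd u) (x + t)
  simp only [fdiff, conv]
  rw [← integral_sub h1 h2]
  congr 1
  funext y
  rw [show x - y + t = x + t - y by ring, sub_mul]

lemma fdiff_conv_right (t u : ℝ) {f : ℝ → ℝ} (hf : Integrable f) :
    fdiff t (conv f (hatOne u)) = conv f (fdiff t (hatOne u)) := by
  funext x
  have h1 := slice_integrable hf (hatOne_measurable u) (hatOne_bdd u) x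
  have h2 : Integrable (fun y => f (x - y) * hatOne u (y + t)) := by
    refine slice_integrable hf ((hatOne_measurable u).comp (measurable_add_const t))
      (C := 1) (fun y => hatOne_bdd u (y + t)) x
  have key : (∫ y, f (x + t - y) * hatOne u y) = ∫ y, f (x - y) * hatOne u (y + t) := by
    rw [← integral_add_right_eq_self (fun y => f (x + t - y) * hatOne u y) t]
    congr 1
    funext y
    rw [show x + t - (y + t) = x - y by ring]
  simp only [fdiff, conv]
  rw [key, ← integral_sub h1 h2]
  congr 1
  funext y
  rw [mul_sub]

lemma iter_fdiff_conv (t u : ℝ) (k : ℕ) : ∀ {f : ℝ → ℝ}, Integrable f →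
    (fdiff t)^[k] (conv f (hatOne u)) = conv ((fdiff t)^[k] f) (hatOne u) := by
  induction k with
  | zero => intro f _; simp
  | succ k ih =>
    intro f hf
    rw [Function.iterate_succ_apply, Function.iterate_succ_apply,
      fdiff_conv_left t u hf, ih (fdiff_integrable t hf)]

lemma hat_integrable (u : ℝ) : ∀ r : ℕ, Integrable (hat u r)
  | 0 => by simp only [hat]; exact integrable_zero ℝ ℝ (volume : Measure ℝ)
  | 1 => hatOne_integrable u
  | (r + 2) => conv_integrable (hat_integrable u (r + 1)) (hatOne_integrable u)

/-- L¹-bound on the first difference of an interval indicator. -/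
lemma fdiff_ico_l1 (a b t : ℝ) :
    ∫ x, |(Ico a b).indicator (1 : ℝ → ℝ) x - (Ico a b).indicator 1 (x + t)| ≤ 2 * |t| := by
  set I1 : Set ℝ := Ico (min a (a - t)) (max a (a - t)) with hI1
  set I2 : Set ℝ := Ico (min b (b - t)) (max b (b - t)) with hI2
  have hmem : ∀ (c x : ℝ), c - t ≤ x → x < c → x ∈ Ico (min c (c - t)) (max c (c - t)) :=
    fun c x h1 h2 => ⟨le_trans (min_le_right _ _) h1, lt_of_lt_of_le h2 (le_max_left _ _)⟩
  have hmem' : ∀ (c x : ℝ), c ≤ x → x < c - t → x ∈ Ico (min c (c - t)) (max c (c - t)) :=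
    fun c x h1 h2 => ⟨le_trans (min_le_left _ _) h1, lt_of_lt_of_le h2 (le_max_right _ _)⟩
  have hpt : ∀ x, |(Ico a b).indicator (1 : ℝ → ℝ) x - (Ico a b).indicator 1 (x + t)|
      ≤ I1.indicator 1 x + I2.indicator 1 x := by
    intro x
    have n1 : (0:ℝ) ≤ I1.indicator 1 x := Set.indicator_nonneg (fun _ _ => zero_le_one) x
    have n2 : (0:ℝ) ≤ I2.indicator 1 x := Set.indicator_nonneg (fun _ _ => zero_le_one) x
    by_cases h1 : x ∈ Ico a b <;> by_cases h2 : x + t ∈ Ico a b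
    · rw [Set.indicator_of_mem h1, Set.indicator_of_mem h2]
      simpa using add_nonneg n1 n2
    · rw [Set.indicator_of_mem h1, Set.indicator_of_notMem h2]
      simp only [Pi.one_apply, sub_zero, abs_one]
      obtain ⟨ha, hb⟩ := h1
      rw [Set.mem_Ico, not_and_or, not_le, not_lt] at h2
      rcases h2 with h2 | h2
      · have hx : x ∈ I1 := hmem' a x ha (by linarith)
        rw [Set.indicator_of_mem hx]; simp only [Pi.one_apply]; linarith
      · have hx : x ∈ I2 := hmem b x (by linarith) hb
        rw [Set.indicator_of_mem hx]; simp only [Pi.one_apply]; linarith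
    · rw [Set.indicator_of_notMem h1, Set.indicator_of_mem h2]
      simp only [Pi.one_apply, zero_sub, abs_neg, abs_one]
      obtain ⟨ha, hb⟩ := h2
      rw [Set.mem_Ico, not_and_or, not_le, not_lt] at h1
      rcases h1 with h1 | h1
      · have hx : x ∈ I1 := hmem a x (by linarith) h1
        rw [Set.indicator_of_mem hx]; simp only [Pi.one_apply]; linarith
      · have hx : x ∈ I2 := hmem' b x h1 (by linarith)
        rw [Set.indicator_of_mem hx]; simp only [Pi.one_apply]; linarith
    · rw [Set.indicator_of_notMem h1, Set.indicator_of_notMem h2]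
      simpa using add_nonneg n1 n2
  have hico : Integrable ((Ico a b).indicator (1 : ℝ → ℝ)) := by
    rw [integrable_indicator_iff measurableSet_Ico]
    exact integrableOn_const measure_Ico_lt_top.ne
  have hi1 : Integrable (I1.indicator (1 : ℝ → ℝ)) := by
    rw [hI1, integrable_indicator_iff measurableSet_Ico]
    exact integrableOn_const measure_Ico_lt_top.ne
  have hi2 : Integrable (I2.indicator (1 : ℝ → ℝ)) := by
    rw [hI2, integrable_indicator_iff measurableSet_Ico]
    exact integrableOn_const measure_Ico_lt_top.ne
  have hlen : ∀ c : ℝ, (volume (Ico (min c (c - t)) (max c (c - t)))).toReal = |t| := by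
    intro c
    rw [Real.volume_Ico, max_sub_min_eq_abs, show c - t - c = -t by ring, abs_neg,
      ENNReal.toReal_ofReal (abs_nonneg t)]
  have habs : Integrable (fun x => |(Ico a b).indicator (1 : ℝ → ℝ) x
      - (Ico a b).indicator 1 (x + t)|) := (hico.sub (hico.comp_add_right t)).abs
  calc ∫ x, |(Ico a b).indicator (1 : ℝ → ℝ) x - (Ico a b).indicator 1 (x + t)|
      ≤ ∫ x, (I1.indicator 1 x + I2.indicator 1 x) := integral_mono habs (hi1.add hi2) hpt
    _ = (volume I1).toReal + (volume I2).toReal := by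
        rw [integral_add hi1 hi2, hI1, hI2, integral_indicator_one measurableSet_Ico,
          integral_indicator_one measurableSet_Ico]; rfl
    _ = 2 * |t| := by rw [hI1, hI2, hlen a, hlen b]; ring

lemma fdiff_hatOne_l1 (u t : ℝ) :
    ∫ x, |fdiff t (hatOne u) x| ≤ 2 * |t| := by
  simpa [fdiff, hatOne] using fdiff_ico_l1 (-(u/2)) (u/2) t

/-- key bound by induction -/
lemma main_bound (u t : ℝ) : ∀ r : ℕ, 1 ≤ r →
    Integrable ((fdiff t)^[r] (hat u r)) ∧
      ∫ x, |((fdiff t)^[r] (hat u r)) x| ≤ (2 * |t|) ^ r := by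
  intro r
  induction r with
  | zero => omega
  | succ n ih =>
    intro _
    rcases Nat.eq_or_lt_of_le (Nat.one_le_iff_ne_zero.2 (Nat.succ_ne_zero n)) with h | h
    · -- n = 0, base case r = 1
      have hn : n = 0 := by omega
      subst hn
      constructor
      · simpa [hat] using fdiff_integrable t (hatOne_integrable u)
      · simpa [hat, pow_one] using fdiff_hatOne_l1 u t
    · -- n ≥ 1
      have hn : 1 ≤ n := by omega
      obtain ⟨hint, hbnd⟩ := ih hn
      have hhat : hat u (n + 1) = conv (hat u n) (hatOne u) := by
        obtain ⟨m, rfl⟩ : ∃ m, n = m + 1 := ⟨n - 1, by omega⟩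
        rfl
      have key : (fdiff t)^[n + 1] (hat u (n + 1)) =
          conv ((fdiff t)^[n] (hat u n)) (fdiff t (hatOne u)) := by
        rw [hhat, Function.iterate_succ_apply',
          iter_fdiff_conv t u n (hat_integrable u n),
          fdiff_conv_right t u hint]
      have hg0 : Integrable (fdiff t (hatOne u)) := fdiff_integrable t (hatOne_integrable u)
      refine ⟨by rw [key]; exact conv_integrable hint hg0, ?_⟩
      rw [key]
      calc ∫ x, |conv ((fdiff t)^[n] (hat u n)) (fdiff t (hatOne u)) x|
          ≤ (∫ x, |((fdiff t)^[n] (hat u n)) x|) * ∫ x, |fdiff t (hatOne u) x| :=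
            conv_l1 hint hg0
        _ ≤ (2 * |t|) ^ n * (2 * |t|) := by
            apply mul_le_mul hbnd (fdiff_hatOne_l1 u t)
              (integral_nonneg fun x => abs_nonneg _)
              (pow_nonneg (by positivity) n)
        _ = (2 * |t|) ^ (n + 1) := by ring

theorem stmt6 (r : ℕ) (hr : 2 ≤ r) :
    ∃ C : ℝ, 0 < C ∧ ∀ (u : ℝ), 0 < u → ∀ t : ℝ,
      ∫ x : ℝ, |((fdiff t)^[r] (hat u r)) x| ≤ C * |t| ^ r := by
  refine ⟨2 ^ r, by positivity, fun u _ t => ?_⟩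
  have := (main_bound u t r (by omega)).2
  calc ∫ x : ℝ, |((fdiff t)^[r] (hat u r)) x| ≤ (2 * |t|) ^ r := this
    _ = 2 ^ r * |t| ^ r := mul_pow 2 |t| r
end

section
/- Let d = 2, r ≥ 1, and B = ∏_{j=1}^2 [z_j − r u_j/2, z_j + r u_j/2) ⊂ [0,1)² with u ∈ (0,1/2]², v := vol(B) = r² u_1 u_2. Define H_B^r(s) := (u_1 u_2 / 2^{s_1+s_2})^{r/2} ∏_{j=1}^2 min((2^{s_j} u_j)^{r/2}, (2^{s_j} u_j)^{-r/2}). Then for all t ∈ ℕ_0 with v ≥ r² 2^{-t+1}, Σ_{s_1+s_2 = t} H_B^r(s)² ≤ C · 2^{-2rt} · log(2^t v) for an absolute constant C. -/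
open Real Finset

/-!
Write `a = 2 ^ s₁ * u₁` and `b = 2 ^ s₂ * u₂`. Since `x * min x x⁻¹ = min x 1 ^ 2`, the summand
indexed by `s` equals `2 ^ (-2rt) * (min a 1 * min b 1) ^ (2r)`, which is at most
`2 ^ (-2rt) * (min a 1 * min b 1) ^ 2`. Along the antidiagonal `s₁ + s₂ = t` the product
`a * b = 2 ^ t * u₁ * u₂ =: P` is fixed: the terms with `a < 1` (or `b < 1`) form a geometric
series of sum at most `4 / 3`, and at most `log₂ P + 1` indices have `a, b ≥ 1`, because two such
indices `i ≤ j` give `2 ^ (j - i) ≤ P`. As `P ≥ 2`, the sum is at most `5 log₂ P`.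
-/

lemma min_rpow_rpow_neg {x c : ℝ} (hx : 0 < x) (hc : 0 ≤ c) :
    min (x ^ c) (x ^ (-c)) = min x x⁻¹ ^ c := by
  rw [rpow_neg hx.le, ← inv_rpow hx.le]
  rcases le_total x x⁻¹ with h | h
  · rw [min_eq_left h, min_eq_left (rpow_le_rpow hx.le h hc)]
  · rw [min_eq_right h, min_eq_right (rpow_le_rpow (inv_nonneg.mpr hx.le) h hc)]

lemma mul_min_self_inv {a : ℝ} (ha : 0 < a) : a * min a a⁻¹ = min a 1 ^ 2 := by
  rcases le_total a 1 with h | h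
  · rw [min_eq_left h, min_eq_left (h.trans ((one_le_inv₀ ha).2 h))]
    ring
  · rw [min_eq_right h, min_eq_right ((inv_le_one₀ ha).2 h |>.trans h), mul_inv_cancel₀ ha.ne']
    norm_num

lemma div_rpow_mul_min_rpow_rpow_neg {p u c : ℝ} (hp : 0 < p) (hu : 0 < u) (hc : 0 ≤ c) :
    (u / p) ^ c * min ((p * u) ^ c) ((p * u) ^ (-c)) = (min (p * u) 1 / p) ^ (2 * c) := by
  have hpu : 0 < p * u := mul_pos hp hu
  have key : u / p * min (p * u) (p * u)⁻¹ = (min (p * u) 1 / p) ^ 2 := by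
    rw [div_pow, ← mul_min_self_inv hpu]
    field_simp
  rw [min_rpow_rpow_neg hpu hc, ← mul_rpow (by positivity) (by positivity), key,
    rpow_mul (by positivity), rpow_two]

lemma sq_rpow_mul_min_rpow_le {r : ℕ} (hr : 1 ≤ r) {u₁ u₂ : ℝ} (hu₁ : 0 < u₁) (hu₂ : 0 < u₂)
    {s₁ s₂ t : ℕ} (hs : s₁ + s₂ = t) :
    ((u₁ * u₂ / 2 ^ (s₁ + s₂)) ^ ((r : ℝ) / 2) *
        (min (((2 : ℝ) ^ s₁ * u₁) ^ ((r : ℝ) / 2)) (((2 : ℝ) ^ s₁ * u₁) ^ (-((r : ℝ) / 2))) *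
          min (((2 : ℝ) ^ s₂ * u₂) ^ ((r : ℝ) / 2)) (((2 : ℝ) ^ s₂ * u₂) ^ (-((r : ℝ) / 2))))) ^ 2
      ≤ 2 ^ (-(2 * (r : ℝ) * t)) * (min (2 ^ s₁ * u₁) 1 * min (2 ^ s₂ * u₂) 1) ^ 2 := by
  have hg₁ : 0 ≤ min ((2 : ℝ) ^ s₁ * u₁) 1 := le_min (by positivity) zero_le_one
  have hg₂ : 0 ≤ min ((2 : ℝ) ^ s₂ * u₂) 1 := le_min (by positivity) zero_le_one
  have hc : (0 : ℝ) ≤ r / 2 := by positivity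
  have hsplit : u₁ * u₂ / 2 ^ (s₁ + s₂) = (u₁ / 2 ^ s₁) * (u₂ / 2 ^ s₂) := by
    rw [pow_add]; field_simp
  have h2 : (2 : ℝ) ^ (-(2 * (r : ℝ) * t)) = ((2 ^ t) ^ r)⁻¹ ^ 2 := by
    rw [rpow_neg zero_le_two, show 2 * (r : ℝ) * t = ((t * r * 2 : ℕ) : ℝ) by push_cast; ring,
      rpow_natCast, pow_mul, pow_mul, inv_pow]
  rw [hsplit, mul_rpow (by positivity) (by positivity), mul_mul_mul_comm,
    div_rpow_mul_min_rpow_rpow_neg (by positivity) hu₁ hc,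
    div_rpow_mul_min_rpow_rpow_neg (by positivity) hu₂ hc, show (2 : ℝ) * (r / 2) = r by ring,
    rpow_natCast, rpow_natCast, ← mul_pow, div_mul_div_comm, ← pow_add, hs, h2, div_pow,
    div_eq_mul_inv, mul_pow, mul_comm]
  gcongr
  exact pow_le_of_le_one (mul_nonneg hg₁ hg₂)
    (mul_le_one₀ (min_le_right _ _) hg₂ (min_le_right _ _)) (by omega)

lemma sq_min_mul_min_le_indicators {a b : ℝ} (ha : 0 ≤ a) (hb : 0 ≤ b) :
    (min a 1 * min b 1) ^ 2 ≤
      (if a < 1 then a ^ 2 else 0) + (if b < 1 then b ^ 2 else 0) +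
        (if 1 ≤ a ∧ 1 ≤ b then 1 else 0) := by
  have ha' : 0 ≤ min a 1 := le_min ha zero_le_one
  have hb' : 0 ≤ min b 1 := le_min hb zero_le_one
  have hA : (min a 1 * min b 1) ^ 2 ≤ min a 1 ^ 2 :=
    pow_le_pow_left₀ (mul_nonneg ha' hb') (mul_le_of_le_one_right ha' (min_le_right _ _)) 2
  have hB : (min a 1 * min b 1) ^ 2 ≤ min b 1 ^ 2 :=
    pow_le_pow_left₀ (mul_nonneg ha' hb') (mul_le_of_le_one_left hb' (min_le_right _ _)) 2
  have hC : min a 1 ^ 2 ≤ 1 := pow_le_one₀ ha' (min_le_right _ _)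
  have hA0 : 0 ≤ (if a < 1 then a ^ 2 else 0) := by positivity
  have hB0 : 0 ≤ (if b < 1 then b ^ 2 else 0) := by positivity
  have hC0 : 0 ≤ (if 1 ≤ a ∧ 1 ≤ b then (1 : ℝ) else 0) := by positivity
  rcases lt_or_ge a 1 with ha1 | ha1
  · have : min a 1 ^ 2 = a ^ 2 := by rw [min_eq_left ha1.le]
    rw [if_pos ha1]
    linarith
  rcases lt_or_ge b 1 with hb1 | hb1
  · have : min b 1 ^ 2 = b ^ 2 := by rw [min_eq_left hb1.le]
    rw [if_pos hb1]
    linarith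
  · rw [if_pos (show 1 ≤ a ∧ 1 ≤ b from ⟨ha1, hb1⟩)]
    linarith

lemma sum_filter_sq_two_pow_mul_lt_one_le (S : Finset ℕ) {u : ℝ} (hu : 0 ≤ u) :
    ∑ k ∈ S with 2 ^ k * u < 1, ((2 : ℝ) ^ k * u) ^ 2 ≤ 4 / 3 := by
  set T := S.filter (fun k => (2 : ℝ) ^ k * u < 1)
  rcases T.eq_empty_or_nonempty with hT | hT
  · rw [hT, sum_empty]
    norm_num
  set M := T.max' hT
  have hM : (2 : ℝ) ^ M * u < 1 := (mem_filter.mp (T.max'_mem hT)).2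
  have hsq : ∀ k, ((2 : ℝ) ^ k * u) ^ 2 = 4 ^ k * u ^ 2 := fun k => by
    rw [mul_pow, ← pow_mul, mul_comm k 2, pow_mul]
    norm_num
  calc ∑ k ∈ T, ((2 : ℝ) ^ k * u) ^ 2
      ≤ ∑ k ∈ range (M + 1), ((2 : ℝ) ^ k * u) ^ 2 :=
        sum_le_sum_of_subset_of_nonneg
          (fun k hk => mem_range.mpr (Nat.lt_succ_of_le (T.le_max' k hk)))
          (fun _ _ _ => sq_nonneg _)
    _ = (4 ^ (M + 1) - 1) / 3 * u ^ 2 := by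
        simp_rw [hsq, ← sum_mul, geom_sum_eq (by norm_num : (4 : ℝ) ≠ 1)]
        norm_num
    _ ≤ 4 / 3 * ((2 : ℝ) ^ M * u) ^ 2 := by
        rw [hsq, pow_succ]
        nlinarith [sq_nonneg u]
    _ ≤ 4 / 3 := by
        nlinarith [mul_nonneg (pow_nonneg zero_le_two M) hu]

lemma card_le_logb_of_two_pow_sub_le {S : Finset ℕ} {P : ℝ} (hP : 1 ≤ P)
    (h : ∀ i ∈ S, ∀ j ∈ S, i ≤ j → (2 : ℝ) ^ (j - i) ≤ P) :
    (#S : ℝ) ≤ logb 2 P + 1 := by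
  have hlog : 0 ≤ logb 2 P := logb_nonneg one_lt_two hP
  rcases S.eq_empty_or_nonempty with hS | hS
  · rw [hS, card_empty, Nat.cast_zero]
    linarith
  set m := S.min' hS
  set M := S.max' hS
  have hcard : #S ≤ M - m + 1 := by
    have := card_le_card (fun k hk => mem_Icc.mpr ⟨S.min'_le k hk, S.le_max' k hk⟩ :
      S ⊆ Icc m M)
    rw [Nat.card_Icc] at this
    omega
  have hspread : ((M - m : ℕ) : ℝ) ≤ logb 2 P := by
    rw [le_logb_iff_rpow_le one_lt_two (by linarith), rpow_natCast]
    exact h m (S.min'_mem hS) M (S.max'_mem hS) (S.min'_le M (S.max'_mem hS))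
  calc (#S : ℝ) ≤ ((M - m : ℕ) : ℝ) + 1 := by exact_mod_cast hcard
    _ ≤ logb 2 P + 1 := by linarith

lemma sum_antidiagonal_sq_min_mul_min_le {u₁ u₂ : ℝ} (hu₁ : 0 < u₁) (hu₂ : 0 < u₂) {t : ℕ}
    (hP : 2 ≤ 2 ^ t * (u₁ * u₂)) :
    ∑ s ∈ antidiagonal t, (min (2 ^ s.1 * u₁) 1 * min (2 ^ s.2 * u₂) 1) ^ 2 ≤
      5 * logb 2 (2 ^ t * (u₁ * u₂)) := by
  have hlog : 1 ≤ logb 2 (2 ^ t * (u₁ * u₂)) := by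
    rw [le_logb_iff_rpow_le one_lt_two (by linarith), rpow_one]
    exact hP
  have hfst : ∑ s ∈ antidiagonal t, (if (2 : ℝ) ^ s.1 * u₁ < 1 then (2 ^ s.1 * u₁) ^ 2 else 0)
      ≤ 4 / 3 := by
    rw [Nat.sum_antidiagonal_eq_sum_range_succ_mk, ← sum_filter]
    exact sum_filter_sq_two_pow_mul_lt_one_le _ hu₁.le
  have hsnd : ∑ s ∈ antidiagonal t, (if (2 : ℝ) ^ s.2 * u₂ < 1 then (2 ^ s.2 * u₂) ^ 2 else 0)
      ≤ 4 / 3 := by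
    rw [← Nat.sum_antidiagonal_swap, Nat.sum_antidiagonal_eq_sum_range_succ_mk, ← sum_filter]
    exact sum_filter_sq_two_pow_mul_lt_one_le _ hu₂.le
  have hboth : ∑ s ∈ antidiagonal t,
      (if 1 ≤ (2 : ℝ) ^ s.1 * u₁ ∧ 1 ≤ (2 : ℝ) ^ s.2 * u₂ then (1 : ℝ) else 0)
      ≤ logb 2 (2 ^ t * (u₁ * u₂)) + 1 := by
    rw [Nat.sum_antidiagonal_eq_sum_range_succ_mk, sum_boole]
    refine card_le_logb_of_two_pow_sub_le (by linarith) fun i hi j hj hij => ?_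
    simp only [mem_filter, mem_range] at hi hj
    have hpow : (2 : ℝ) ^ (j - i) * 2 ^ i * 2 ^ (t - j) = 2 ^ t := by
      rw [← pow_add, ← pow_add]
      congr 1
      omega
    calc (2 : ℝ) ^ (j - i) ≤ 2 ^ (j - i) * ((2 ^ i * u₁) * (2 ^ (t - j) * u₂)) :=
          le_mul_of_one_le_right (by positivity) (one_le_mul_of_one_le_of_one_le hi.2.1 hj.2.2)
      _ = 2 ^ t * (u₁ * u₂) := by rw [← hpow]; ring
  calc ∑ s ∈ antidiagonal t, (min (2 ^ s.1 * u₁) 1 * min (2 ^ s.2 * u₂) 1) ^ 2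
      ≤ ∑ s ∈ antidiagonal t,
          ((if (2 : ℝ) ^ s.1 * u₁ < 1 then (2 ^ s.1 * u₁) ^ 2 else 0) +
            (if (2 : ℝ) ^ s.2 * u₂ < 1 then (2 ^ s.2 * u₂) ^ 2 else 0) +
            (if 1 ≤ (2 : ℝ) ^ s.1 * u₁ ∧ 1 ≤ (2 : ℝ) ^ s.2 * u₂ then 1 else 0)) :=
        sum_le_sum fun s _ => sq_min_mul_min_le_indicators (by positivity) (by positivity)
    _ ≤ 4 / 3 + 4 / 3 + (logb 2 (2 ^ t * (u₁ * u₂)) + 1) := by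
        rw [sum_add_distrib, sum_add_distrib]
        linarith
    _ ≤ 5 * logb 2 (2 ^ t * (u₁ * u₂)) := by linarith

theorem stmt11 :
    ∃ C : ℝ, 0 < C ∧ ∀ (r : ℕ), 1 ≤ r →
      ∀ u₁ u₂ : ℝ, 0 < u₁ → u₁ ≤ 1 / 2 → 0 < u₂ → u₂ ≤ 1 / 2 →
      ∀ z₁ z₂ : ℝ,
        Set.Ico (z₁ - r * u₁ / 2) (z₁ + r * u₁ / 2) ⊆ Set.Ico (0 : ℝ) 1 →
        Set.Ico (z₂ - r * u₂ / 2) (z₂ + r * u₂ / 2) ⊆ Set.Ico (0 : ℝ) 1 →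
      ∀ v : ℝ, v = (r : ℝ) ^ 2 * u₁ * u₂ →
      ∀ t : ℕ, (r : ℝ) ^ 2 * (2 : ℝ) ^ (1 - (t : ℝ)) ≤ v →
      ∑ s ∈ Finset.HasAntidiagonal.antidiagonal t,
          ((u₁ * u₂ / 2 ^ (s.1 + s.2)) ^ ((r : ℝ) / 2) *
            (min (((2 : ℝ) ^ s.1 * u₁) ^ ((r : ℝ) / 2)) (((2 : ℝ) ^ s.1 * u₁) ^ (-((r : ℝ) / 2))) *
             min (((2 : ℝ) ^ s.2 * u₂) ^ ((r : ℝ) / 2)) (((2 : ℝ) ^ s.2 * u₂) ^ (-((r : ℝ) / 2))))) ^ 2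
        ≤ C * (2 : ℝ) ^ (-(2 * (r : ℝ) * t)) * Real.log ((2 : ℝ) ^ t * v) := by
  refine ⟨5 / log 2, by positivity, fun r hr u₁ u₂ hu₁ _ hu₂ _ _ _ _ _ v hv t ht => ?_⟩
  have hr2 : (1 : ℝ) ≤ (r : ℝ) ^ 2 := one_le_pow₀ (by exact_mod_cast hr)
  have hP : 2 ≤ 2 ^ t * (u₁ * u₂) := by
    have hpow : (2 : ℝ) ^ (1 - (t : ℝ)) = 2 / 2 ^ t := by
      rw [rpow_sub two_pos, rpow_one, rpow_natCast]
    rw [hv, hpow, mul_assoc] at ht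
    have hdiv := le_of_mul_le_mul_left ht (by positivity)
    rwa [div_le_iff₀ (by positivity), mul_comm] at hdiv
  have huv : 2 ^ t * (u₁ * u₂) ≤ 2 ^ t * v := by
    rw [hv, mul_assoc]
    exact mul_le_mul_of_nonneg_left (le_mul_of_one_le_left (by positivity) hr2) (by positivity)
  calc _ ≤ ∑ s ∈ antidiagonal t,
        2 ^ (-(2 * (r : ℝ) * t)) * (min (2 ^ s.1 * u₁) 1 * min (2 ^ s.2 * u₂) 1) ^ 2 :=
        sum_le_sum fun s hs => sq_rpow_mul_min_rpow_le hr hu₁ hu₂ (mem_antidiagonal.mp hs)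
    _ ≤ 2 ^ (-(2 * (r : ℝ) * t)) * (5 * logb 2 (2 ^ t * (u₁ * u₂))) := by
        rw [← mul_sum]
        gcongr
        exact sum_antidiagonal_sq_min_mul_min_le hu₁ hu₂ hP
    _ = 5 / log 2 * 2 ^ (-(2 * (r : ℝ) * t)) * log (2 ^ t * (u₁ * u₂)) := by
        rw [logb]
        ring
    _ ≤ 5 / log 2 * 2 ^ (-(2 * (r : ℝ) * t)) * log (2 ^ t * v) := by
        gcongr
end
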